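/- arXiv:2012.10008 — 4 statements merged into one kernel-verified Lean document; each statement's English description precedes it below -/
import Mathlib

section
/- Let n, m, o be positive natural numbers, v : Fin m → ℝ with v j ≥ 0, c : Fin n → Fin o → ℝ with c i t ≥ 0, w : Fin m → Fin o → ℝ, α ≥ 0, and h : Fin n → Fin m → ℝ with h i j ≥ 0. For an assignment S : Finset (Fin n × Fin m), let A_j(S) = {i | (i, j) ∈ S} and define f(S) = ∑_{j} (v j * ∑_{t} min(w j t, ∑_{i ∈ A_j(S)} c i t) + α * ∑_{i ∈ A_j(S)} h i j). Then f is submodular: for all assignments X ⊆ Y and every pair e = (i, j) ∉ Y, f(X ∪ {e}) − f(X) ≥ f(Y ∪ {e}) − f(Y). -/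
open Finset

/-- The set of robots assigned to task `j` under assignment `S`. -/
def Assigned {n m : ℕ} (S : Finset (Fin n × Fin m)) (j : Fin m) : Finset (Fin n) :=
  Finset.univ.filter fun i => (i, j) ∈ S

/-- The team objective function. -/
def teamObj {n m o : ℕ} (v : Fin m → ℝ) (c : Fin n → Fin o → ℝ) (w : Fin m → Fin o → ℝ)
    (α : ℝ) (h : Fin n → Fin m → ℝ) (S : Finset (Fin n × Fin m)) : ℝ :=
  ∑ j, (v j * ∑ t, min (w j t) (∑ i ∈ Assigned S j, c i t)
        + α * ∑ i ∈ Assigned S j, h i j)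

/-! Adding a robot to one task is submodular in each summand separately: the capability
terms `min (w j t) ·` are concave, so their increments shrink as the team grows, while the
travel reward `α * h i j` is modular and cancels from both marginals. -/

lemma min_add_sub_min_le_of_le {β : Type*} [AddCommGroup β] [LinearOrder β]
    [IsOrderedAddMonoid β] {a b b' d : β} (hb : b ≤ b') (hd : 0 ≤ d) :
    min a (d + b') - min a b' ≤ min a (d + b) - min a b := by
  rw [sub_le_sub_iff]
  rcases min_cases a (d + b) with ⟨h₁, -⟩ | ⟨h₁, -⟩ <;>
  rcases min_cases a b' with ⟨h₂, -⟩ | ⟨h₂, -⟩ <;>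
  rw [h₁, h₂]
  · exact add_le_add (min_le_left _ _) (min_le_left _ _)
  · exact add_le_add (min_le_left _ _) ((min_le_right _ _).trans hb)
  · rw [add_comm (d + b)]
    exact add_le_add (min_le_left _ _) ((min_le_right _ _).trans (le_add_of_nonneg_left hd))
  · rw [add_right_comm]
    exact add_le_add (min_le_right _ _) (min_le_right _ _)

lemma Assigned_mono {n m : ℕ} {X Y : Finset (Fin n × Fin m)} (hXY : X ⊆ Y) (j : Fin m) :
    Assigned X j ⊆ Assigned Y j :=
  monotone_filter_right _ fun _ _ => @hXY _

lemma Assigned_union_singleton_self {n m : ℕ} (S : Finset (Fin n × Fin m)) (i : Fin n)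
    (j : Fin m) : Assigned (S ∪ {(i, j)}) j = insert i (Assigned S j) := by
  ext a
  simp [Assigned]

lemma Assigned_union_singleton_of_ne {n m : ℕ} (S : Finset (Fin n × Fin m)) (i : Fin n)
    {j j' : Fin m} (hj : j' ≠ j) : Assigned (S ∪ {(i, j)}) j' = Assigned S j' := by
  ext a
  simp [Assigned, hj]

lemma teamObj_union_singleton_sub {n m o : ℕ} (v : Fin m → ℝ) (c : Fin n → Fin o → ℝ)
    (w : Fin m → Fin o → ℝ) (α : ℝ) (h : Fin n → Fin m → ℝ) {S : Finset (Fin n × Fin m)}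
    {i : Fin n} {j : Fin m} (hS : (i, j) ∉ S) :
    teamObj v c w α h (S ∪ {(i, j)}) - teamObj v c w α h S =
      v j * ∑ t, (min (w j t) (c i t + ∑ k ∈ Assigned S j, c k t)
        - min (w j t) (∑ k ∈ Assigned S j, c k t)) + α * h i j := by
  have hi : i ∉ Assigned S j := by simpa [Assigned] using hS
  rw [teamObj, teamObj, ← sum_sub_distrib, sum_eq_single j]
  · simp only [Assigned_union_singleton_self, sum_insert hi]
    rw [sum_sub_distrib]
    ring
  · intro j' _ hj
    rw [Assigned_union_singleton_of_ne S i hj, sub_self]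
  · simp

theorem teamObj_submodular_general {n m o : ℕ}
    (v : Fin m → ℝ) (hv : ∀ j, 0 ≤ v j)
    (c : Fin n → Fin o → ℝ) (hc : ∀ i t, 0 ≤ c i t)
    (w : Fin m → Fin o → ℝ)
    (α : ℝ)
    (h : Fin n → Fin m → ℝ) :
    ∀ X Y : Finset (Fin n × Fin m), X ⊆ Y → ∀ e ∉ Y,
      teamObj v c w α h (Y ∪ {e}) - teamObj v c w α h Y ≤
        teamObj v c w α h (X ∪ {e}) - teamObj v c w α h X := by
  rintro X Y hXY ⟨i, j⟩ hY
  rw [teamObj_union_singleton_sub v c w α h hY,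
    teamObj_union_singleton_sub v c w α h fun hX => hY (hXY hX)]
  have := hv j
  gcongr v j * ?_ + _
  refine sum_le_sum fun t _ => min_add_sub_min_le_of_le ?_ (hc i t)
  exact sum_le_sum_of_subset_of_nonneg (Assigned_mono hXY j) fun k _ _ => hc k t

theorem teamObj_submodular {n m o : ℕ} (hn : 0 < n) (hm : 0 < m) (ho : 0 < o)
    (v : Fin m → ℝ) (hv : ∀ j, 0 ≤ v j)
    (c : Fin n → Fin o → ℝ) (hc : ∀ i t, 0 ≤ c i t)
    (w : Fin m → Fin o → ℝ)
    (α : ℝ) (hα : 0 ≤ α)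
    (h : Fin n → Fin m → ℝ) (hh : ∀ i j, 0 ≤ h i j) :
    ∀ X Y : Finset (Fin n × Fin m), X ⊆ Y → ∀ e ∉ Y,
      teamObj v c w α h (Y ∪ {e}) - teamObj v c w α h Y ≤
        teamObj v c w α h (X ∪ {e}) - teamObj v c w α h X :=
  teamObj_submodular_general v hv c hc w α h
end

section
/- Let n, m, o be positive natural numbers, v : Fin m → ℝ, c : Fin n → Fin o → ℝ with c i t ≥ 0, w : Fin m → Fin o → ℝ, α : ℝ, and h : Fin n → Fin m → ℝ. Define f(S) = ∑_{j} (v j * ∑_{t} min(w j t, ∑_{i ∈ A_j(S)} c i t) + α * ∑_{i ∈ A_j(S)} h i j) for assignments S : Finset (Fin n × Fin m), where A_j(S) = {i | (i, j) ∈ S}. Then for every assignment S and every pair (i, j') ∈ S, the loss from removing robot i from task j' equals the algorithm's loss formula: f(S) − f(S \ {(i,j')}) = v j' * ∑_{t} max(0, min((w j' t − ∑_{i' ∈ A_{j'}(S)} c i' t) + c i t, c i t)) + α * h i j'. -/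
open Finset

/- Removing robot `i` from task `j'` changes only the team of `j'`, lowering each of its coverage
sums `s` by `c i t`. With `a = w j' t`, the loss `min a s - min a (s - c)` in capped coverage is
`max 0 (min (a - s + c) c)` for `c ≥ 0`, and `a - s` is the residual requirement `r_{j't}`. -/

theorem min_sub_min_sub_eq {α : Type*} [AddCommGroup α] [LinearOrder α] [IsOrderedAddMonoid α]
    (a s : α) {c : α} (hc : 0 ≤ c) :
    min a s - min a (s - c) = max 0 (min (a - s + c) c) := by
  grind

section Assigned

variable {n m : ℕ} {S : Finset (Fin n × Fin m)} {i : Fin n} {j j' : Fin m}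

@[simp]
theorem mem_assigned : i ∈ Assigned S j ↔ (i, j) ∈ S := by
  simp [Assigned]

theorem assigned_sdiff_singleton_of_ne (hj : j ≠ j') :
    Assigned (S \ {(i, j')}) j = Assigned S j := by
  ext x
  simp [hj]

theorem assigned_sdiff_singleton_self : Assigned (S \ {(i, j)}) j = (Assigned S j).erase i := by
  ext x
  simp [and_comm]

theorem sum_assigned_sdiff_singleton_add {M : Type*} [AddCommMonoid M] (hij : (i, j) ∈ S)
    (g : Fin n → M) : ∑ x ∈ Assigned (S \ {(i, j)}) j, g x + g i = ∑ x ∈ Assigned S j, g x := by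
  rw [assigned_sdiff_singleton_self, sum_erase_add _ _ (mem_assigned.mpr hij)]

end Assigned

theorem teamObj_sub_teamObj_sdiff_singleton {n m o : ℕ} (v : Fin m → ℝ) (c : Fin n → Fin o → ℝ)
    (w : Fin m → Fin o → ℝ) (α : ℝ) (h : Fin n → Fin m → ℝ) (S : Finset (Fin n × Fin m))
    (i : Fin n) (j' : Fin m) :
    teamObj v c w α h S - teamObj v c w α h (S \ {(i, j')}) =
      v j' * ∑ t, (min (w j' t) (∑ x ∈ Assigned S j', c x t)
          - min (w j' t) (∑ x ∈ Assigned (S \ {(i, j')}) j', c x t))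
        + α * (∑ x ∈ Assigned S j', h x j' - ∑ x ∈ Assigned (S \ {(i, j')}) j', h x j') := by
  unfold teamObj
  rw [← sum_sub_distrib, sum_eq_single_of_mem j' (mem_univ _)]
  · rw [sum_sub_distrib]
    ring
  · intro j _ hj
    simp only [assigned_sdiff_singleton_of_ne hj, sub_self]

theorem removal_loss_formula_general {n m o : ℕ}
    (v : Fin m → ℝ)
    (c : Fin n → Fin o → ℝ) (hc : ∀ i t, 0 ≤ c i t)
    (w : Fin m → Fin o → ℝ)
    (α : ℝ) (h : Fin n → Fin m → ℝ) :
    ∀ (S : Finset (Fin n × Fin m)) (i : Fin n) (j' : Fin m), (i, j') ∈ S →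
      teamObj v c w α h S - teamObj v c w α h (S \ {(i, j')}) =
        v j' * ∑ t, max 0
            (min ((w j' t - ∑ i' ∈ Assigned S j', c i' t) + c i t) (c i t))
          + α * h i j' := by
  intro S i j' hij
  have hsum (g : Fin n → ℝ) :
      ∑ x ∈ Assigned (S \ {(i, j')}) j', g x = ∑ x ∈ Assigned S j', g x - g i := by
    rw [← sum_assigned_sdiff_singleton_add hij, add_sub_cancel_right]
  simp only [teamObj_sub_teamObj_sdiff_singleton, hsum, sub_sub_cancel,
    min_sub_min_sub_eq _ _ (hc i _)]

theorem removal_loss_formula {n m o : ℕ} (hn : 0 < n) (hm : 0 < m) (ho : 0 < o)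
    (v : Fin m → ℝ)
    (c : Fin n → Fin o → ℝ) (hc : ∀ i t, 0 ≤ c i t)
    (w : Fin m → Fin o → ℝ)
    (α : ℝ) (h : Fin n → Fin m → ℝ) :
    ∀ (S : Finset (Fin n × Fin m)) (i : Fin n) (j' : Fin m), (i, j') ∈ S →
      teamObj v c w α h S - teamObj v c w α h (S \ {(i, j')}) =
        v j' * ∑ t, max 0
            (min ((w j' t - ∑ i' ∈ Assigned S j', c i' t) + c i t) (c i t))
          + α * h i j' :=
  removal_loss_formula_general v c hc w α h
end

section
/- Let V be a finite type and f : Finset V → ℝ a set function with f(∅) = 0 that is monotone (X ⊆ Y implies f(X) ≤ f(Y)) and submodular (for X ⊆ Y and e ∉ Y, f(X ∪ {e}) − f(X) ≥ f(Y ∪ {e}) − f(Y)). Let π : V → Fin n be a labeling (assigning to each robot-task pair its robot), and call a set S feasible if π is injective on S (each robot is used at most once). Suppose S* = {e_1, …, e_k} is produced greedily: writing S_0 = ∅ and S_l = {e_1, …, e_l}, each S_l is feasible, e_{l+1} attains the maximum of f(S_l ∪ {e}) − f(S_l) over all e ∉ S_l with S_l ∪ {e} feasible, and S_k is maximal feasible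 (no e ∉ S_k keeps S_k ∪ {e} feasible). Then f(S*) ≥ (1/2) * f(T) for every feasible set T. -/
open Finset

/-- A set of robot-task pairs is feasible if each robot is used at most once,
i.e. the robot-projection `π` is injective on it (a partition matroid constraint). -/
def Feasible {V : Type*} {n : ℕ} (π : V → Fin n) (S : Finset V) : Prop :=
  Set.InjOn π ↑S

/-- `greedySet e l = {e_1, …, e_l}`: the set of the first `l` greedily chosen elements. -/
def greedySet {V : Type*} [DecidableEq V] {k : ℕ} (e : Fin k → V) (l : ℕ) : Finset V :=
  (Finset.univ.filter fun i : Fin k => (i : ℕ) < l).image e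

/-! The greedy algorithm loses at most a factor 2 because each element `x` of `T` outside the
greedy set `S` can be charged to the greedy step `i` that took `π x`'s robot: just before that
step `x` was still a feasible choice, so by submodularity and greedy optimality its marginal
value at `S` is at most the gain `f S_{i+1} - f S_i`. Since `T` uses each robot once, distinct
elements are charged to distinct steps, and the gains telescope to `f S`; hence
`f T ≤ f (S ∪ T) ≤ f S + f S`. -/

theorem Finset.sum_le_sum_of_inj {ι κ M : Type*} [AddCommMonoid M] [PartialOrder M]
    [IsOrderedAddMonoid M] {s : Finset ι} {t : Finset κ} {a : ι → M} {b : κ → M}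
    (g : ∀ i ∈ s, κ) (hg : ∀ i hi, g i hi ∈ t)
    (hinj : ∀ i hi j hj, g i hi = g j hj → i = j)
    (hle : ∀ i hi, a i ≤ b (g i hi)) (hb : ∀ j ∈ t, 0 ≤ b j) :
    ∑ i ∈ s, a i ≤ ∑ j ∈ t, b j := by
  classical
  calc ∑ i ∈ s, a i = ∑ i ∈ s.attach, a i := (sum_attach s a).symm
    _ ≤ ∑ i ∈ s.attach, b (g i.1 i.2) := sum_le_sum fun i _ => hle i.1 i.2
    _ = ∑ j ∈ s.attach.image (fun i => g i.1 i.2), b j :=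
      (sum_image fun i _ j _ hij => Subtype.ext (hinj i.1 i.2 j.1 j.2 hij)).symm
    _ ≤ ∑ j ∈ t, b j :=
      sum_le_sum_of_subset_of_nonneg (image_subset_iff.2 fun i _ => hg i.1 i.2)
        fun j hj _ => hb j hj

section Submodular

variable {V : Type*} [DecidableEq V]

def Submodular (f : Finset V → ℝ) : Prop :=
  ∀ X Y : Finset V, X ⊆ Y → ∀ x ∉ Y, f (Y ∪ {x}) - f Y ≤ f (X ∪ {x}) - f X

theorem Submodular.marginal_anti {f : Finset V → ℝ} (hf : Submodular f) {X Y : Finset V}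
    (hXY : X ⊆ Y) {x : V} (hx : x ∉ Y) :
    f (insert x Y) - f Y ≤ f (insert x X) - f X := by
  simpa only [insert_eq, union_comm {x}] using hf X Y hXY x hx

theorem Submodular.sub_le_sum_marginal {f : Finset V → ℝ} (hf : Submodular f) (S T : Finset V) :
    f (S ∪ T) - f S ≤ ∑ x ∈ T \ S, (f (insert x S) - f S) := by
  induction T using Finset.induction_on with
  | empty => simp
  | @insert a T haT ih =>
    by_cases haS : a ∈ S
    · rwa [union_insert, insert_eq_of_mem (mem_union_left T haS), insert_sdiff_of_mem T haS]
    · have haST : a ∉ S ∪ T := by simp [haS, haT]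
      have := hf.marginal_anti (subset_union_left (s₂ := T)) haST
      rw [insert_sdiff_of_notMem T haS, sum_insert (by simp [haT]), union_insert]
      linarith

end Submodular

section Feasible

variable {V : Type*} {n : ℕ} {π : V → Fin n}

theorem Feasible.mono {S A : Finset V} (hS : Feasible π S) (hAS : A ⊆ S) : Feasible π A :=
  Set.InjOn.mono (coe_subset.2 hAS) hS

theorem exists_map_eq_of_not_feasible_insert [DecidableEq V] {S : Finset V}
    (hS : Feasible π S) {x : V} (hx : ¬Feasible π (insert x S)) : ∃ y ∈ S, π x = π y := by
  by_cases hxS : x ∈ S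
  · exact ⟨x, hxS, rfl⟩
  · unfold Feasible at hx
    rw [coe_insert, Set.injOn_insert (mod_cast hxS)] at hx
    obtain ⟨y, hyS, hyx⟩ : π x ∈ π '' S := not_not.1 fun h => hx ⟨hS, h⟩
    exact ⟨y, hyS, hyx.symm⟩

theorem Feasible.insert_of_map_eq [DecidableEq V] {S A : Finset V} (hS : Feasible π S)
    (hAS : A ⊆ S) {x y : V} (hyS : y ∈ S) (hyA : y ∉ A) (hxy : π x = π y) :
    Feasible π (insert x A) := by
  by_cases hxA : x ∈ A
  · rw [insert_eq_of_mem hxA]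
    exact hS.mono hAS
  · unfold Feasible
    rw [coe_insert, Set.injOn_insert (mod_cast hxA)]
    refine ⟨hS.mono hAS, ?_⟩
    rintro ⟨z, hzA, hzx⟩
    have : y = z := hS hyS (hAS hzA) (hxy ▸ hzx.symm)
    exact hyA (this ▸ hzA)

end Feasible

section greedySet

variable {V : Type*} [DecidableEq V] {k : ℕ} (e : Fin k → V)

theorem mem_greedySet {l : ℕ} {x : V} :
    x ∈ greedySet e l ↔ ∃ i : Fin k, (i : ℕ) < l ∧ e i = x := by
  simp [greedySet]

theorem apply_mem_greedySet (i : Fin k) : e i ∈ greedySet e k :=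
  (mem_greedySet e).2 ⟨i, i.isLt, rfl⟩

theorem greedySet_zero : greedySet e 0 = ∅ := by
  simp [greedySet]

theorem greedySet_succ (i : Fin k) : greedySet e (i + 1) = insert (e i) (greedySet e i) := by
  ext x
  simp only [mem_greedySet, mem_insert, Nat.lt_succ_iff_lt_or_eq, Fin.val_inj]
  grind

theorem greedySet_mono {l m : ℕ} (h : l ≤ m) : greedySet e l ⊆ greedySet e m := by
  intro x
  simp only [mem_greedySet]
  exact fun ⟨i, hi, hx⟩ => ⟨i, hi.trans_le h, hx⟩

theorem sum_greedySet_increments (f : Finset V → ℝ) :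
    ∑ i : Fin k, (f (greedySet e (i + 1)) - f (greedySet e i)) = f (greedySet e k) - f ∅ := by
  rw [Fin.sum_univ_eq_sum_range (fun l => f (greedySet e (l + 1)) - f (greedySet e l)),
    sum_range_sub (fun l => f (greedySet e l)), greedySet_zero]

theorem marginal_le_greedy_increment {n : ℕ} {π : V → Fin n} {f : Finset V → ℝ}
    (hf : Submodular f) (hS : Feasible π (greedySet e k)) (i : Fin k)
    (hnew : e i ∉ greedySet e i)
    (hgreedy : ∀ x ∉ greedySet e i, Feasible π (insert x (greedySet e i)) →
      f (insert x (greedySet e i)) - f (greedySet e i) ≤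
        f (insert (e i) (greedySet e i)) - f (greedySet e i))
    {x : V} (hx : x ∉ greedySet e k) (hxi : π x = π (e i)) :
    f (insert x (greedySet e k)) - f (greedySet e k) ≤
      f (greedySet e (i + 1)) - f (greedySet e i) := by
  have hsub : greedySet e i ⊆ greedySet e k := greedySet_mono e i.isLt.le
  have hfeas : Feasible π (insert x (greedySet e i)) :=
    hS.insert_of_map_eq hsub (apply_mem_greedySet e i) hnew hxi
  calc f (insert x (greedySet e k)) - f (greedySet e k)
      ≤ f (insert x (greedySet e i)) - f (greedySet e i) := hf.marginal_anti hsub hx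
    _ ≤ f (insert (e i) (greedySet e i)) - f (greedySet e i) :=
      hgreedy x (fun h => hx (hsub h)) hfeas
    _ = f (greedySet e (i + 1)) - f (greedySet e i) := by rw [greedySet_succ]

end greedySet

theorem greedy_half_optimal_general {V : Type*} [DecidableEq V] {n : ℕ}
    (f : Finset V → ℝ)
    (hf0 : f ∅ = 0)
    (hmono : ∀ X Y : Finset V, X ⊆ Y → f X ≤ f Y)
    (hsub : ∀ X Y : Finset V, X ⊆ Y → ∀ x ∉ Y,
      f (Y ∪ {x}) - f Y ≤ f (X ∪ {x}) - f X)
    (π : V → Fin n)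
    (k : ℕ) (e : Fin k → V)
    -- every prefix of the greedy sequence is feasible
    (hfeas : ∀ l ≤ k, Feasible π (greedySet e l))
    -- each newly chosen element is indeed new
    (hnew : ∀ (l : ℕ) (hl : l < k), e ⟨l, hl⟩ ∉ greedySet e l)
    -- each greedy choice maximizes the marginal gain among feasible additions
    (hgreedy : ∀ (l : ℕ) (hl : l < k), ∀ x ∉ greedySet e l,
      Feasible π (insert x (greedySet e l)) →
      f (insert x (greedySet e l)) - f (greedySet e l) ≤
        f (insert (e ⟨l, hl⟩) (greedySet e l)) - f (greedySet e l))
    -- the final greedy set is maximal feasible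
    (hmax : ∀ x ∉ greedySet e k, ¬ Feasible π (insert x (greedySet e k))) :
    ∀ T : Finset V, Feasible π T →
      (1 / 2 : ℝ) * f T ≤ f (greedySet e k) := by
  intro T hT
  set S := greedySet e k
  have hS : Feasible π S := hfeas k le_rfl
  have collide : ∀ x ∈ T \ S, ∃ i : Fin k, π x = π (e i) := by
    intro x hx
    obtain ⟨y, hyS, hxy⟩ := exists_map_eq_of_not_feasible_insert hS (hmax x (mem_sdiff.1 hx).2)
    obtain ⟨i, -, rfl⟩ := (mem_greedySet e).1 hyS
    exact ⟨i, hxy⟩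
  choose ι hι using collide
  have charged : ∑ x ∈ T \ S, (f (insert x S) - f S) ≤
      ∑ i : Fin k, (f (greedySet e (i + 1)) - f (greedySet e i)) :=
    sum_le_sum_of_inj ι (fun _ _ => mem_univ _)
      (fun x hx y hy hxy =>
        hT (mem_sdiff.1 hx).1 (mem_sdiff.1 hy).1 (by rw [hι x hx, hι y hy, hxy]))
      (fun x hx => marginal_le_greedy_increment e hsub hS _ (hnew _ _) (hgreedy _ _)
        (mem_sdiff.1 hx).2 (hι x hx))
      (fun i _ => sub_nonneg.2 (hmono _ _ (greedySet_mono e (Nat.le_succ i))))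
  have hT_le : f T ≤ f (S ∪ T) := hmono _ _ subset_union_right
  have hST := Submodular.sub_le_sum_marginal hsub S T
  rw [sum_greedySet_increments, hf0] at charged
  linarith

theorem greedy_half_optimal {V : Type*} [Fintype V] [DecidableEq V] {n : ℕ}
    (f : Finset V → ℝ)
    (hf0 : f ∅ = 0)
    (hmono : ∀ X Y : Finset V, X ⊆ Y → f X ≤ f Y)
    (hsub : ∀ X Y : Finset V, X ⊆ Y → ∀ x ∉ Y,
      f (Y ∪ {x}) - f Y ≤ f (X ∪ {x}) - f X)
    (π : V → Fin n)
    (k : ℕ) (e : Fin k → V)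
    -- every prefix of the greedy sequence is feasible
    (hfeas : ∀ l ≤ k, Feasible π (greedySet e l))
    -- each newly chosen element is indeed new
    (hnew : ∀ (l : ℕ) (hl : l < k), e ⟨l, hl⟩ ∉ greedySet e l)
    -- each greedy choice maximizes the marginal gain among feasible additions
    (hgreedy : ∀ (l : ℕ) (hl : l < k), ∀ x ∉ greedySet e l,
      Feasible π (insert x (greedySet e l)) →
      f (insert x (greedySet e l)) - f (greedySet e l) ≤
        f (insert (e ⟨l, hl⟩) (greedySet e l)) - f (greedySet e l))
    -- the final greedy set is maximal feasible
    (hmax : ∀ x ∉ greedySet e k, ¬ Feasible π (insert x (greedySet e k))) :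
    ∀ T : Finset V, Feasible π T →
      (1 / 2 : ℝ) * f T ≤ f (greedySet e k) :=
  greedy_half_optimal_general f hf0 hmono hsub π k e hfeas hnew hgreedy hmax
end

section
/- Let x_i, x_j : ℝ → EuclideanSpace ℝ (Fin 2) be differentiable trajectories of two robots, R_c ≥ 0 a communication range, and γ : ℝ. Define the barrier function h : ℝ → ℝ by h(t) = R_c^2 − ‖x_i(t) − x_j(t)‖^2. If ‖x_i(0) − x_j(0)‖ ≤ R_c and for all t ≥ 0 one has deriv h t + γ * h t ≥ 0, then ‖x_i(t) − x_j(t)‖ ≤ R_c for all t ≥ 0, i.e., the communication link between robots i and j is maintained for all forward time. -/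
/-!
The barrier condition `h' + γ h ≥ 0` is a linear differential inequality for `-h`, namely
`(-h)' ≤ -γ (-h)`; Grönwall's inequality with initial bound `-h(0) ≤ 0` keeps `-h ≤ 0` for all
forward time. Nonnegativity of `h` is exactly the communication-range constraint.
-/

/-- The pairwise connectivity barrier function `h(t) = R_c² − ‖x_i(t) − x_j(t)‖²`. -/
noncomputable def barrier (xi xj : ℝ → EuclideanSpace ℝ (Fin 2)) (Rc : ℝ) (t : ℝ) : ℝ :=
  Rc ^ 2 - ‖xi t - xj t‖ ^ 2

theorem nonneg_of_deriv_add_mul_nonneg {f : ℝ → ℝ} {γ a t : ℝ} (hf : Differentiable ℝ f)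
    (ha : 0 ≤ f a) (hd : ∀ s ≥ a, 0 ≤ deriv f s + γ * f s) (ht : a ≤ t) : 0 ≤ f t := by
  have hbound := le_gronwallBound_of_liminf_deriv_right_le (f := fun s => -f s)
    (f' := fun s => -deriv f s) (δ := 0) (K := -γ) (ε := 0) (b := t)
    hf.continuous.neg.continuousOn
    (fun s _ _ hr => (hf s).hasDerivAt.neg.hasDerivWithinAt.liminf_right_slope_le hr)
    (neg_nonpos.2 ha) (fun s hs => by linarith [hd s hs.1]) t ⟨ht, le_rfl⟩
  rw [gronwallBound_ε0_δ0] at hbound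
  exact neg_nonpos.1 hbound

theorem differentiable_barrier {xi xj : ℝ → EuclideanSpace ℝ (Fin 2)} (hxi : Differentiable ℝ xi)
    (hxj : Differentiable ℝ xj) (Rc : ℝ) : Differentiable ℝ (barrier xi xj Rc) :=
  (differentiable_const _).sub ((hxi.sub hxj).norm_sq ℝ)

theorem barrier_nonneg_iff {xi xj : ℝ → EuclideanSpace ℝ (Fin 2)} {Rc : ℝ} (hRc : 0 ≤ Rc) (t : ℝ) :
    0 ≤ barrier xi xj Rc t ↔ ‖xi t - xj t‖ ≤ Rc := by
  rw [barrier, sub_nonneg, pow_le_pow_iff_left₀ (norm_nonneg _) hRc two_ne_zero]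

theorem connectivity_forward_invariant_general
    (xi xj : ℝ → EuclideanSpace ℝ (Fin 2))
    (hxi : Differentiable ℝ xi) (hxj : Differentiable ℝ xj)
    (Rc : ℝ) (γ : ℝ)
    (h0 : ‖xi 0 - xj 0‖ ≤ Rc)
    (hbar : ∀ t ≥ (0 : ℝ),
      deriv (barrier xi xj Rc) t + γ * barrier xi xj Rc t ≥ 0) :
    ∀ t ≥ (0 : ℝ), ‖xi t - xj t‖ ≤ Rc := by
  have hRc : 0 ≤ Rc := (norm_nonneg _).trans h0
  intro t ht
  rw [← barrier_nonneg_iff hRc]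
  exact nonneg_of_deriv_add_mul_nonneg (differentiable_barrier hxi hxj Rc)
    ((barrier_nonneg_iff hRc 0).2 h0) hbar ht

theorem connectivity_forward_invariant
    (xi xj : ℝ → EuclideanSpace ℝ (Fin 2))
    (hxi : Differentiable ℝ xi) (hxj : Differentiable ℝ xj)
    (Rc : ℝ) (hRc : 0 ≤ Rc) (γ : ℝ)
    (h0 : ‖xi 0 - xj 0‖ ≤ Rc)
    (hbar : ∀ t ≥ (0 : ℝ),
      deriv (barrier xi xj Rc) t + γ * barrier xi xj Rc t ≥ 0) :
    ∀ t ≥ (0 : ℝ), ‖xi t - xj t‖ ≤ Rc :=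
  connectivity_forward_invariant_general xi xj hxi hxj Rc γ h0 hbar
end
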